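/- Let P ⊆ ℝ^d be a polytope with vertex set V, diameter D, and ‖P‖ = max{‖x − y_1‖ : x ∈ P}, let a ∈ ℝ^d be nonzero, fix a minimising vertex v_1 ∈ V* = V ∩ argmin{a·x : x ∈ P}, and let v ∈ V have gap Δ_v = a·(v − v_1) > 0. Set θ_v = min{a·u/(‖a‖‖u‖) : u ∈ N_P(v), u ≠ 0} and φ_v = θ_v + 1. Let α ≥ 3, β = 1/3 − 1/α, and let a_1, …, a_n ∈ ℝ^d with ε_{n+1} = (1/√n)·Σ_{i=1}^n (a − a_i). Let y_{n+1} = y_1 − η·(a_1 + ⋯ + a_n)/√n and x_{n+1} = P_P(y_{n+1}) for a parameter η > 0. If n > (α‖P‖/(η‖a‖))²·max{1, 1/(2φ_v)} and ‖ε_{n+1}‖ < β·√n·‖a‖·min{1, √(2φ_v)}, then v does not lie on the tangent plane at x_{n+1} in the direction y_{n+1} − x_{n+1}; that is, (y_{n+1} − x_{n+1})·v < (y_{n+1} − x_{n+1})·x_{n+1}. -/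
import Mathlib


open Finset
open scoped RealInnerProductSpace

/-- `IsProjOn X p q` says that `q` is the Euclidean nearest-point projection of `p`
onto the set `X`. -/
def IsProjOn {d : ℕ} (X : Set (EuclideanSpace ℝ (Fin d)))
    (p q : EuclideanSpace ℝ (Fin d)) : Prop :=
  q ∈ X ∧ ∀ z ∈ X, ‖p - q‖ ≤ ‖p - z‖

/-- The normal cone to a convex set `X` at a point `v`. -/
def normalCone {d : ℕ} (X : Set (EuclideanSpace ℝ (Fin d)))
    (v : EuclideanSpace ℝ (Fin d)) : Set (EuclideanSpace ℝ (Fin d)) :=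
  {u | ∀ x ∈ X, ⟪u, x⟫ ≤ ⟪u, v⟫}

set_option maxHeartbeats 8000000 in
/-- Lemma 11: if `n` is large and the error term is small, then the suboptimal vertex
`v` does not lie on the tangent plane at `x_{n+1}` in the direction
`y_{n+1} - x_{n+1}`. -/
theorem suboptimal_vertex_off_tangent_plane {d : ℕ}
    (V : Finset (EuclideanSpace ℝ (Fin d)))
    (P : Set (EuclideanSpace ℝ (Fin d)))
    (hP : P = convexHull ℝ (V : Set (EuclideanSpace ℝ (Fin d))))
    (y1 : EuclideanSpace ℝ (Fin d))
    (D K : ℝ)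
    (hD : IsGreatest {r : ℝ | ∃ x ∈ P, ∃ y ∈ P, r = ‖x - y‖} D)
    (hK : IsGreatest {r : ℝ | ∃ x ∈ P, r = ‖x - y1‖} K)
    (a : EuclideanSpace ℝ (Fin d)) (ha : a ≠ 0)
    (v1 : EuclideanSpace ℝ (Fin d)) (hv1 : v1 ∈ V)
    (hv1min : ∀ z ∈ P, ⟪a, v1⟫ ≤ ⟪a, z⟫)
    (v : EuclideanSpace ℝ (Fin d)) (hv : v ∈ V)
    (hΔv : 0 < ⟪a, v - v1⟫)
    (θ : ℝ)
    (hθ : IsLeast {r : ℝ | ∃ u ∈ normalCone P v, u ≠ 0 ∧ r = ⟪a, u⟫ / (‖a‖ * ‖u‖)} θ)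
    (α : ℝ) (hα : 3 ≤ α)
    (η : ℝ) (hη : 0 < η)
    (n : ℕ) (A : ℕ → EuclideanSpace ℝ (Fin d))
    (hn : (α * K / (η * ‖a‖)) ^ 2 * max 1 (1 / (2 * (θ + 1))) < (n : ℝ))
    (hε : ‖(Real.sqrt n)⁻¹ • ∑ i ∈ Icc 1 n, (a - A i)‖ <
      (1 / 3 - 1 / α) * Real.sqrt n * ‖a‖ * min 1 (Real.sqrt (2 * (θ + 1))))
    (y' x' : EuclideanSpace ℝ (Fin d))
    (hy' : y' = y1 - (η / Real.sqrt n) • ∑ i ∈ Icc 1 n, A i)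
    (hx' : IsProjOn P y' x') :
    ⟪y' - x', v⟫ < ⟪y' - x', x'⟫ := by
  have hna : (0:ℝ) < ‖a‖ := norm_pos_iff.mpr ha
  set φ : ℝ := θ + 1 with hφdef
  set m : ℝ := min 1 (Real.sqrt (2 * φ)) with hmdef
  set sn : ℝ := Real.sqrt n with hsndef
  have hsn0 : 0 ≤ sn := Real.sqrt_nonneg _
  have hm0 : 0 ≤ m := le_min one_pos.le (Real.sqrt_nonneg _)
  have hm1 : m ≤ 1 := min_le_left _ _
  have hα0 : (0:ℝ) < α := by linarith
  have hprod : 0 < (1/3 - 1/α) * sn * ‖a‖ * m := lt_of_le_of_lt (norm_nonneg _) hε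
  have hB : 0 < 1/3 - 1/α := by
    by_contra h
    push_neg at h
    nlinarith [mul_nonneg (mul_nonneg hsn0 hna.le) hm0]
  have hsnp : 0 < sn := by
    by_contra h
    push_neg at h
    rw [le_antisymm h hsn0] at hprod
    simp at hprod
  have hmp : 0 < m := by
    by_contra h
    push_neg at h
    rw [le_antisymm h hm0] at hprod
    simp at hprod
  have hφp : 0 < φ := by
    have := (lt_min_iff.mp hmp).2
    have h2 := Real.sqrt_pos.mp this
    linarith
  have hm2 : m ^ 2 ≤ 2 * φ := by
    have h1 : m ≤ Real.sqrt (2 * φ) := min_le_right _ _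
    nlinarith [Real.sq_sqrt (show (0:ℝ) ≤ 2 * φ by linarith)]
  have hn2 : (n : ℝ) = sn ^ 2 := (Real.sq_sqrt (Nat.cast_nonneg n)).symm
  -- bounds on K
  obtain ⟨x0, hx0P, hx0⟩ := hK.1
  have hK0 : 0 ≤ K := hx0 ▸ norm_nonneg _
  have hKle : ‖y1 - x'‖ ≤ K := by
    rw [norm_sub_rev]; exact hK.2 ⟨x', hx'.1, rfl⟩
  -- derive α K < η ‖a‖ sn m from hn
  set c : ℝ := α * K / (η * ‖a‖) with hcdef
  have hc0 : 0 ≤ c := by positivity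
  have hc1 : c < sn := by
    have h1 : c ^ 2 * 1 ≤ c ^ 2 * max 1 (1 / (2 * φ)) :=
      mul_le_mul_of_nonneg_left (le_max_left _ _) (sq_nonneg c)
    have h2 : c ^ 2 < sn ^ 2 := by linarith [hn2 ▸ hn]
    exact lt_of_pow_lt_pow_left₀ 2 hsn0 h2
  have hc2 : c < Real.sqrt (2 * φ) * sn := by
    have h1 : c ^ 2 * (1 / (2 * φ)) ≤ c ^ 2 * max 1 (1 / (2 * φ)) :=
      mul_le_mul_of_nonneg_left (le_max_right _ _) (sq_nonneg c)
    have h2 : c ^ 2 * (1 / (2 * φ)) < sn ^ 2 := by linarith [hn2 ▸ hn]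
    have h3 : c ^ 2 < 2 * φ * sn ^ 2 := by
      have := mul_lt_mul_of_pos_right h2 (show (0:ℝ) < 2 * φ by linarith)
      calc c ^ 2 = c ^ 2 * (1 / (2 * φ)) * (2 * φ) := by field_simp
        _ < sn ^ 2 * (2 * φ) := this
        _ = 2 * φ * sn ^ 2 := by ring
    have hsq : (Real.sqrt (2 * φ) * sn) ^ 2 = 2 * φ * sn ^ 2 := by
      rw [mul_pow, Real.sq_sqrt (by linarith : (0:ℝ) ≤ 2 * φ)]
    exact lt_of_pow_lt_pow_left₀ 2 (mul_nonneg (Real.sqrt_nonneg (2 * φ)) hsn0) (hsq ▸ h3)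
  have hcm : c < sn * m := by
    rcases min_cases (1:ℝ) (Real.sqrt (2 * φ)) with ⟨hmeq, _⟩ | ⟨hmeq, _⟩
    · rw [hmdef, hmeq, mul_one]; exact hc1
    · rw [hmdef, hmeq]; linarith [hc2]
  have hKlt : α * K < sn * m * (η * ‖a‖) := by
    have hpos : (0:ℝ) < η * ‖a‖ := by positivity
    rw [hcdef] at hcm
    exact (div_lt_iff₀ hpos).mp hcm
  -- the error vector
  set E : EuclideanSpace ℝ (Fin d) := (sn)⁻¹ • ∑ i ∈ Icc 1 n, (a - A i) with hEdef
  have hεn : η * ‖E‖ < η * ((1/3 - 1/α) * sn * ‖a‖ * m) := by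
    exact mul_lt_mul_of_pos_left hε hη
  set r : EuclideanSpace ℝ (Fin d) := (y1 - x') + η • E with hrdef
  have hsum : ∑ i ∈ Icc 1 n, (a - A i) = (n : ℝ) • a - ∑ i ∈ Icc 1 n, A i := by
    rw [Finset.sum_sub_distrib, Finset.sum_const, Nat.card_Icc]
    simp [Nat.cast_smul_eq_nsmul]
  have hsn' : sn ≠ 0 := ne_of_gt hsnp
  have hu : y' - x' = r - (η * sn) • a := by
    rw [hy', hrdef, hEdef, hsum]
    match_scalars
    all_goals field_simp
    all_goals linear_combination (-η) * hn2
  have hnormw : ‖(η * sn) • a‖ = η * sn * ‖a‖ := by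
    rw [norm_smul, Real.norm_eq_abs, abs_of_pos (by positivity), mul_assoc]
  have hul : η * sn * ‖a‖ - ‖r‖ ≤ ‖y' - x'‖ := by
    rw [hu, norm_sub_rev, ← hnormw]
    exact norm_sub_norm_le _ _
  have hrle : ‖r‖ ≤ K + η * ‖E‖ := by
    rw [hrdef]
    calc ‖(y1 - x') + η • E‖ ≤ ‖y1 - x'‖ + ‖η • E‖ := norm_add_le _ _
      _ ≤ K + η * ‖E‖ := by
          rw [norm_smul, Real.norm_eq_abs, abs_of_pos hη]
          linarith
  have hKdiv : K < sn * m * (η * ‖a‖) / α := (lt_div_iff₀ hα0).mpr (by linarith)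
  have hnr : ‖r‖ < η * sn * ‖a‖ * m / 3 := by
    have h1 : sn * m * (η * ‖a‖) / α = η * sn * ‖a‖ * m * (1/α) := by ring
    have h2 : η * ((1/3 - 1/α) * sn * ‖a‖ * m)
        = η * sn * ‖a‖ * m / 3 - η * sn * ‖a‖ * m * (1/α) := by ring
    linarith
  have hs : (0:ℝ) < η * sn * ‖a‖ := by positivity
  have hSm : η * sn * ‖a‖ * m ≤ η * sn * ‖a‖ * 1 := mul_le_mul_of_nonneg_left hm1 hs.le
  have hnu_lb : η * sn * ‖a‖ * (2/3) < ‖y' - x'‖ := by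
    linarith only [hul, hnr, hSm]
  have hune : y' - x' ≠ 0 := by
    have h : 0 < ‖y' - x'‖ := by linarith only [hnu_lb, hs]
    exact norm_pos_iff.mp h
  -- obtuse angle property of the projection
  have hPconv : Convex ℝ P := hP ▸ convex_convexHull ℝ _
  haveI : Nonempty ↑P := ⟨⟨x', hx'.1⟩⟩
  have hbdd : BddBelow (Set.range fun w : P => ‖y' - ↑w‖) := by
    refine ⟨0, ?_⟩
    rintro b ⟨z, rfl⟩
    exact norm_nonneg _
  have hinf : ‖y' - x'‖ = ⨅ w : P, ‖y' - w‖ := by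
    apply le_antisymm
    · exact le_ciInf fun w => hx'.2 (↑w) w.2
    · exact ciInf_le hbdd ⟨x', hx'.1⟩
  have hobt : ∀ z ∈ P, ⟪y' - x', z - x'⟫ ≤ 0 :=
    (norm_eq_iInf_iff_real_inner_le_zero hPconv hx'.1).mp hinf
  have hvP : v ∈ P := hP ▸ subset_convexHull ℝ _ (Finset.mem_coe.mpr hv)
  by_contra hcon
  push_neg at hcon
  have heq : ∀ z ∈ P, ⟪y' - x', z⟫ ≤ ⟪y' - x', v⟫ := by
    intro z hz
    have h1 := hobt z hz
    have h2 := hobt v hvP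
    rw [inner_sub_right] at h1 h2
    linarith only [h1, h2, hcon]
  have hmem : (y' - x') ∈ normalCone P v := heq
  have hθle : θ ≤ ⟪a, y' - x'⟫ / (‖a‖ * ‖y' - x'‖) := hθ.2 ⟨y' - x', hmem, hune, rfl⟩
  have hnupos : (0:ℝ) < ‖a‖ * ‖y' - x'‖ := by
    have h : (0:ℝ) < ‖y' - x'‖ := norm_pos_iff.mpr hune
    positivity
  have hθm : θ * (‖a‖ * ‖y' - x'‖) ≤ ⟪a, y' - x'⟫ := (le_div_iff₀ hnupos).mp hθle
  -- inner product computations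
  have hau : ⟪a, y' - x'⟫ = ⟪a, r⟫ - η * sn * ‖a‖ ^ 2 := by
    rw [hu, inner_sub_right, real_inner_smul_right, real_inner_self_eq_norm_sq]
  have hu2 : ‖y' - x'‖ ^ 2 = ‖r‖ ^ 2 - 2 * (η * sn) * ⟪a, r⟫ + (η * sn * ‖a‖) ^ 2 := by
    rw [hu, norm_sub_sq_real, hnormw, real_inner_smul_right, real_inner_comm]
    ring
  have hid : ‖a‖ ^ 2 * ‖y' - x'‖ ^ 2 - ⟪a, y' - x'⟫ ^ 2
      = ‖a‖ ^ 2 * ‖r‖ ^ 2 - ⟪a, r⟫ ^ 2 := by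
    rw [hau, hu2]; ring
  obtain ⟨hIge, hIle⟩ := abs_le.mp (abs_real_inner_le_norm a r)
  obtain ⟨hJge, hJle⟩ := abs_le.mp (abs_real_inner_le_norm a (y' - x'))
  have hNm : ‖a‖ * (η * sn * ‖a‖ * m) ≤ ‖a‖ * (η * sn * ‖a‖ * 1) :=
    mul_le_mul_of_nonneg_left hSm hna.le
  have hNR : ‖a‖ * ‖r‖ < ‖a‖ * (η * sn * ‖a‖ * m / 3) := by
    have h1 := mul_lt_mul_of_pos_left hnr hna
    linarith only [h1]
  have hQ : 4/3 * ((η * sn * ‖a‖) * ‖a‖) < ‖a‖ * ‖y' - x'‖ - ⟪a, y' - x'⟫ := by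
    rw [hau]
    have f1 := mul_lt_mul_of_pos_left hnu_lb hna
    linarith only [f1, hIle, hNR, hNm]
  have hT0 : 0 ≤ ⟪a, y' - x'⟫ + ‖a‖ * ‖y' - x'‖ := by linarith only [hJge]
  have hT34 : (⟪a, y' - x'⟫ + ‖a‖ * ‖y' - x'‖) * (4/3 * ((η * sn * ‖a‖) * ‖a‖))
      ≤ (⟪a, y' - x'⟫ + ‖a‖ * ‖y' - x'‖) * (‖a‖ * ‖y' - x'‖ - ⟪a, y' - x'⟫) :=
    mul_le_mul_of_nonneg_left hQ.le hT0
  have hTQ : (⟪a, y' - x'⟫ + ‖a‖ * ‖y' - x'‖) * (‖a‖ * ‖y' - x'‖ - ⟪a, y' - x'⟫)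
      ≤ ‖a‖ ^ 2 * ‖r‖ ^ 2 := by
    have h : (⟪a, y' - x'⟫ + ‖a‖ * ‖y' - x'‖) * (‖a‖ * ‖y' - x'‖ - ⟪a, y' - x'⟫)
        = ‖a‖ ^ 2 * ‖y' - x'‖ ^ 2 - ⟪a, y' - x'⟫ ^ 2 := by ring
    rw [h, hid]
    linarith only [sq_nonneg (⟪a, r⟫ : ℝ)]
  have hR2 : ‖a‖ ^ 2 * ‖r‖ ^ 2 ≤ ‖a‖ ^ 2 * ((η * sn * ‖a‖) ^ 2 * (2 * φ) / 9) := by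
    have h1 : ‖r‖ ^ 2 ≤ (η * sn * ‖a‖ * m / 3) ^ 2 :=
      pow_le_pow_left₀ (norm_nonneg r) hnr.le 2
    have h2 : (η * sn * ‖a‖ * m / 3) ^ 2 ≤ (η * sn * ‖a‖) ^ 2 * (2 * φ) / 9 := by
      have h3 := mul_le_mul_of_nonneg_left hm2
        (by positivity : (0:ℝ) ≤ (η * sn * ‖a‖) ^ 2 / 9)
      linarith only [h3]
    exact mul_le_mul_of_nonneg_left (h1.trans h2) (sq_nonneg _)
  have hposQ : (0:ℝ) < 4/3 * ((η * sn * ‖a‖) * ‖a‖) := by positivity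
  have hfin : (⟪a, y' - x'⟫ + ‖a‖ * ‖y' - x'‖) * (4/3 * ((η * sn * ‖a‖) * ‖a‖))
      < (φ * (‖a‖ * ‖y' - x'‖)) * (4/3 * ((η * sn * ‖a‖) * ‖a‖)) := by
    have f1 := mul_lt_mul_of_pos_left (mul_lt_mul_of_pos_left hnu_lb hna) hφp
    have f2 := mul_lt_mul_of_pos_right f1 hposQ
    have hpos : (0:ℝ) < φ * ((η * sn * ‖a‖) ^ 2 * ‖a‖ ^ 2) := by positivity
    have g1 : (⟪a, y' - x'⟫ + ‖a‖ * ‖y' - x'‖) * (4/3 * ((η * sn * ‖a‖) * ‖a‖))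
        ≤ 2/9 * (φ * ((η * sn * ‖a‖) ^ 2 * ‖a‖ ^ 2)) := by
      linarith only [hT34, hTQ, hR2]
    have g2 : 8/9 * (φ * ((η * sn * ‖a‖) ^ 2 * ‖a‖ ^ 2))
        < (φ * (‖a‖ * ‖y' - x'‖)) * (4/3 * ((η * sn * ‖a‖) * ‖a‖)) := by
      have e1 : φ * (‖a‖ * (η * sn * ‖a‖ * (2/3))) * (4/3 * ((η * sn * ‖a‖) * ‖a‖))
          = 8/9 * (φ * ((η * sn * ‖a‖) ^ 2 * ‖a‖ ^ 2)) := by ring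
      rw [e1] at f2
      exact f2
    calc (⟪a, y' - x'⟫ + ‖a‖ * ‖y' - x'‖) * (4/3 * ((η * sn * ‖a‖) * ‖a‖))
        ≤ 2/9 * (φ * ((η * sn * ‖a‖) ^ 2 * ‖a‖ ^ 2)) := g1
      _ < 8/9 * (φ * ((η * sn * ‖a‖) ^ 2 * ‖a‖ ^ 2)) :=
          mul_lt_mul_of_pos_right (by norm_num : (2:ℝ)/9 < 8/9) hpos
      _ < (φ * (‖a‖ * ‖y' - x'‖)) * (4/3 * ((η * sn * ‖a‖) * ‖a‖)) := g2
  have hTlt : ⟪a, y' - x'⟫ + ‖a‖ * ‖y' - x'‖ < φ * (‖a‖ * ‖y' - x'‖) :=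
    lt_of_mul_lt_mul_right hfin hposQ.le
  rw [hφdef] at hTlt
  linarith only [hθm, hTlt]
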